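/- Let β ≥ 0 and ε ∈ [0,1). Suppose v : [0,1] → ℝ is continuous on [0,1] and differentiable on (0,1), and that the function (a,b) ↦ ln(a+b) + v(b/(a+b)) is strictly concave on the convex set {(a,b) ∈ [0,∞)² : a+b > 0}. Let y̲ ∈ [0,1] be the unique maximizer of y ↦ v(y) − ln(1+βy) over [0,1], and let ȳ ∈ [0,1] be the unique maximizer of y ↦ v(y) − ln(1−εy) over [0,1]. Then y̲ ≤ ȳ. -/
import Mathlib

open Set

/-- The lower (buy) boundary `y̲` never exceeds the upper (sell) boundary `ȳ`:
if `y̲` is the unique maximizer of `y ↦ v(y) − ln(1+βy)` on `[0,1]` and `ȳ` is the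
unique maximizer of `y ↦ v(y) − ln(1−εy)` on `[0,1]`, then `y̲ ≤ ȳ`. -/
theorem buy_le_sell_boundary (β ε : ℝ) (hβ : 0 ≤ β) (hε0 : 0 ≤ ε) (hε1 : ε < 1)
    (v : ℝ → ℝ)
    (hv : ContinuousOn v (Icc 0 1))
    (hv' : ∀ x ∈ Ioo (0:ℝ) 1, DifferentiableAt ℝ v x)
    (hconc : StrictConcaveOn ℝ {p : ℝ × ℝ | 0 ≤ p.1 ∧ 0 ≤ p.2 ∧ 0 < p.1 + p.2}
      (fun p : ℝ × ℝ => Real.log (p.1 + p.2) + v (p.2 / (p.1 + p.2))))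
    (yl yu : ℝ) (hyl : yl ∈ Icc (0:ℝ) 1) (hyu : yu ∈ Icc (0:ℝ) 1)
    (hylmax : ∀ y ∈ Icc (0:ℝ) 1, y ≠ yl →
      v y - Real.log (1 + β * y) < v yl - Real.log (1 + β * yl))
    (hyumax : ∀ y ∈ Icc (0:ℝ) 1, y ≠ yu →
      v y - Real.log (1 - ε * y) < v yu - Real.log (1 - ε * yu)) :
    yl ≤ yu := by
  by_contra h
  push_neg at h
  obtain ⟨hl0, hl1⟩ := hyl
  obtain ⟨hu0, hu1⟩ := hyu
  have A := hylmax yu ⟨hu0, hu1⟩ (by exact ne_of_lt h)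
  have B := hyumax yl ⟨hl0, hl1⟩ (by exact ne_of_gt h)
  have C : Real.log (1 + β * yu) ≤ Real.log (1 + β * yl) :=
    Real.log_le_log (by nlinarith) (by nlinarith)
  have D : Real.log (1 - ε * yl) ≤ Real.log (1 - ε * yu) :=
    Real.log_le_log (by nlinarith) (by nlinarith)
  linarith
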